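/- arXiv:1911.05157 — 14 statements merged into one kernel-verified Lean document; each statement's English description precedes it below -/
import Mathlib

section
/- In a unary semigroup (S, ·, ') satisfying x'xx' = x', xx' = x'x, and x^{n+1}x' = x^n (for a fixed positive integer n), the identity x^{n-1}x'' = x^n holds. -/
/-- In a unary semigroup `(S, ·, ')` satisfying `x'xx' = x'`, `xx' = x'x`, and
`x^(n+1) x' = x^n` (fixed positive `n`), the identity `x^(n-1) x'' = x^n` holds.
Powers are taken in `WithOne S` so that `x^0 = 1` is the empty product. -/
theorem stmt_0 {S : Type*} [Semigroup S] (i : S → S) (n : ℕ) (hn : 0 < n)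
    (h1 : ∀ x : S, i x * x * i x = i x)
    (h2 : ∀ x : S, x * i x = i x * x)
    (h3 : ∀ x : S, (x : WithOne S) ^ (n + 1) * (i x : WithOne S) = (x : WithOne S) ^ n) :
    ∀ x : S, (x : WithOne S) ^ (n - 1) * (i (i x) : WithOne S) = (x : WithOne S) ^ n := by
  intro x
  -- abbreviations in S
  set e : S := x * i x with he_def
  have hcomm : x * i x = i x * x := h2 x
  have hee : e * e = e := by
    show (x * i x) * (x * i x) = x * i x
    calc (x * i x) * (x * i x) = x * (i x * x * i x) := by
          simp only [mul_assoc]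
      _ = x * i x := by rw [h1]
  have hex' : e * i x = i x := by
    show (x * i x) * i x = i x
    rw [hcomm]; exact h1 x
  set a : S := x * e with ha_def
  have hae : a * e = a := by rw [ha_def, mul_assoc, hee]
  have hax' : a * i x = e := by
    show (x * e) * i x = e
    rw [he_def, mul_assoc, hex']
  -- x'' = e * x''
  have k2 : i x * i (i x) = i (i x) * i x := h2 (i x)
  have k3 : i x * (i (i x) * i (i x)) = i (i x) := by
    rw [← mul_assoc, k2]; exact h1 (i x)
  have hx'' : i (i x) = e * i (i x) := by
    calc i (i x) = i x * (i (i x) * i (i x)) := k3.symm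
      _ = (e * i x) * (i (i x) * i (i x)) := by rw [hex']
      _ = e * (i x * (i (i x) * i (i x))) := by rw [mul_assoc]
      _ = e * i (i x) := by rw [k3]
  -- now work in WithOne S
  set X : WithOne S := (x : WithOne S) with hX
  set Y : WithOne S := (i x : WithOne S) with hY
  set A : WithOne S := (a : WithOne S) with hA
  set E : WithOne S := (e : WithOne S) with hE
  have cAY : A * Y = E := by rw [hA, hY, hE, ← WithOne.coe_mul, hax']
  have cEY : E * Y = Y := by rw [hE, hY, ← WithOne.coe_mul, hex']
  have cAE : A * E = A := by rw [hA, hE, ← WithOne.coe_mul, hae]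
  have hEYk : ∀ k : ℕ, E * Y ^ (k + 1) = Y ^ (k + 1) := by
    intro k
    induction k with
    | zero => simpa using cEY
    | succ m ih => rw [pow_succ', ← mul_assoc, cEY]
  have hAYk : ∀ k : ℕ, A ^ (k + 1) * Y ^ (k + 1) = E := by
    intro k
    induction k with
    | zero => simpa using cAY
    | succ m ih =>
      calc A ^ (m + 2) * Y ^ (m + 2)
          = (A ^ (m + 1) * A) * (Y * Y ^ (m + 1)) := by rw [pow_succ A (m+1), pow_succ' Y (m+1)]
        _ = A ^ (m + 1) * ((A * Y) * Y ^ (m + 1)) := by simp only [mul_assoc]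
        _ = A ^ (m + 1) * Y ^ (m + 1) := by rw [cAY, hEYk]
        _ = E := ih
  -- derive E * x'' = A
  obtain ⟨m, rfl⟩ : ∃ m, n = m + 1 := ⟨n - 1, (Nat.succ_pred_eq_of_pos hn).symm⟩
  have h3' := h3 (i x)
  rw [← hY] at h3'
  have key : E * (i (i x) : WithOne S) = A := by
    have := congrArg (fun z => A ^ (m + 2) * z) h3'
    calc E * (i (i x) : WithOne S)
        = (A ^ (m + 2) * Y ^ (m + 2)) * (i (i x) : WithOne S) := by rw [hAYk]
      _ = A ^ (m + 2) * (Y ^ (m + 2) * (i (i x) : WithOne S)) := by rw [mul_assoc]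
      _ = A ^ (m + 2) * Y ^ (m + 1) := by rw [h3']
      _ = (A * A ^ (m + 1)) * Y ^ (m + 1) := by rw [pow_succ']
      _ = A * (A ^ (m + 1) * Y ^ (m + 1)) := by rw [mul_assoc]
      _ = A := by rw [hAYk, cAE]
  -- hence x'' = a
  have hiia : i (i x) = a := by
    have : ((i (i x) : S) : WithOne S) = (a : WithOne S) := by
      rw [show ((i (i x) : S) : WithOne S) = E * (i (i x) : WithOne S) by
        rw [hE, ← WithOne.coe_mul, ← hx''], key, hA]
    exact_mod_cast this
  -- finish
  have hXn : X ^ m * X = X ^ (m + 1) := (pow_succ X m).symm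
  calc X ^ (m + 1 - 1) * (i (i x) : WithOne S)
      = X ^ m * (a : WithOne S) := by rw [hiia]; norm_num
    _ = X ^ m * (X * (X * Y)) := by
        rw [hA] at *; rw [ha_def, he_def, WithOne.coe_mul, WithOne.coe_mul, hX, hY]
    _ = ((X ^ m * X) * X) * Y := by simp only [mul_assoc]
    _ = X ^ (m + 1 + 1) * Y := by rw [hXn, ← pow_succ]
    _ = X ^ (m + 1) := h3 x
end

section
/- In a unary semigroup (S, ·, ') satisfying x'xx' = x', xx' = x'x, and x^{n-1}x'' = x^n (for a fixed positive integer n), the identity x^{n+1}x' = x^n holds. -/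
/-- Converse direction: in a unary semigroup satisfying `x'xx' = x'`, `xx' = x'x`, and
`x^(n-1) x'' = x^n` (fixed positive `n`), the identity `x^(n+1) x' = x^n` holds. -/
theorem stmt_1 {S : Type*} [Semigroup S] (i : S → S) (n : ℕ) (hn : 0 < n)
    (h1 : ∀ x : S, i x * x * i x = i x)
    (h2 : ∀ x : S, x * i x = i x * x)
    (h3 : ∀ x : S, (x : WithOne S) ^ (n - 1) * (i (i x) : WithOne S) = (x : WithOne S) ^ n) :
    ∀ x : S, (x : WithOne S) ^ (n + 1) * (i x : WithOne S) = (x : WithOne S) ^ n := by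
  intro x
  set a : WithOne S := (x : WithOne S) with ha
  set b : WithOne S := (i x : WithOne S) with hb
  set c : WithOne S := (i (i x) : WithOne S) with hc
  have hbc : b * c = c * b := by
    rw [hb, hc, ← WithOne.coe_mul, ← WithOne.coe_mul, h2 (i x)]
  have hcbc : c * b * c = c := by
    rw [hb, hc, ← WithOne.coe_mul, ← WithOne.coe_mul, h1 (i x)]
  have h3x : a ^ (n - 1) * c = a ^ n := h3 x
  have hpow : a * a ^ (n - 1) = a ^ n := by
    rw [← pow_succ']
    congr 1
    omega
  calc a ^ (n + 1) * b = a * a ^ n * b := by rw [pow_succ']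
    _ = a * (a ^ (n - 1) * c) * b := by rw [h3x]
    _ = (a * a ^ (n - 1)) * (c * b) := by simp [mul_assoc]
    _ = a ^ n * (b * c) := by rw [hpow, hbc]
    _ = (a ^ (n - 1) * c) * (b * c) := by rw [h3x]
    _ = a ^ (n - 1) * (c * b * c) := by simp [mul_assoc]
    _ = a ^ n := by rw [hcbc, h3x]
end

section
/- In a unary semigroup (S, ·, ') satisfying x'xx' = x', xx' = x'x, xx'x = x'', (x^2)' = (x')^2, and (xy)'' = xy, the identity x^3x' = x^2 holds (so S lies in E_2). -/
/-- In a unary semigroup satisfying `x'xx' = x'`, `xx' = x'x`, `xx'x = x''`,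
`(x^2)' = (x')^2`, and `(xy)'' = xy`, the identity `x^3 x' = x^2` holds. -/
theorem stmt_2 {S : Type*} [Semigroup S] (i : S → S)
    (h1 : ∀ x : S, i x * x * i x = i x)
    (h2 : ∀ x : S, x * i x = i x * x)
    (h4 : ∀ x : S, x * i x * x = i (i x))
    (h6 : ∀ x : S, i (x * x) = i x * i x)
    (h7 : ∀ x y : S, i (i (x * y)) = x * y) :
    ∀ x : S, x * x * x * i x = x * x := by
  intro x
  have e2 : x * i x * (x * i x) = x * i x := by
    calc x * i x * (x * i x) = x * (i x * x * i x) := by simp [mul_assoc]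
    _ = x * i x := by rw [h1]
  have comm : x * (x * i x) = x * i x * x := by
    calc x * (x * i x) = x * (i x * x) := by rw [h2]
    _ = x * i x * x := by simp [mul_assoc]
  have k := h4 (x * x)
  rw [h7] at k; rw [h6] at k
  -- k : x*x*(i x*i x)*(x*x) = x*x
  have reduce : x * x * (i x * i x) * (x * x) = x * (x * i x) * x := by
    calc x * x * (i x * i x) * (x * x)
        = x * (x * i x * (i x * x)) * x := by simp [mul_assoc]
    _ = x * (x * i x * (x * i x)) * x := by rw [← h2]
    _ = x * (x * i x) * x := by rw [e2]
  calc x * x * x * i x = x * (x * (x * i x)) := by simp [mul_assoc]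
  _ = x * (x * i x * x) := by rw [comm]
  _ = x * (x * i x) * x := by simp [mul_assoc]
  _ = x * x := by rw [← reduce, k]
end

section
/- Let S be an epigroup satisfying the identities x'xx' = x', xx' = x'x, and (xy)'x = x(yx)'. Fix c ∈ S, and for x ∈ S define x* = (xc)'x(cx)'. Then (xc)' = x*c for all x ∈ S. -/
/-- In an epigroup (unary semigroup with `x'xx' = x'`, `xx' = x'x`, `(xy)'x = x(yx)'`),
for fixed `c` and `x* = (xc)' x (cx)'`, we have `(xc)' = x* c`. -/
theorem stmt_3 {S : Type*} [Semigroup S] (i : S → S) (c : S)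
    (h1 : ∀ x : S, i x * x * i x = i x)
    (h2 : ∀ x : S, x * i x = i x * x)
    (h5 : ∀ x y : S, i (x * y) * x = x * i (y * x)) :
    ∀ x : S, i (x * c) = (i (x * c) * x * i (c * x)) * c := by
  intro x
  have h := h5 c x
  calc i (x * c) = i (x * c) * (x * c) * i (x * c) := (h1 _).symm
    _ = i (x * c) * x * (c * i (x * c)) := by simp [mul_assoc]
    _ = i (x * c) * x * (i (c * x) * c) := by rw [h]
    _ = (i (x * c) * x * i (c * x)) * c := by simp [mul_assoc]
end

section
/- Let S be an epigroup (a unary semigroup satisfying x'xx' = x', xx' = x'x, and (xy)'x = x(yx)') and fix c ∈ S. Define the variant multiplication x ·_c y = xcy and x* = (xc)'x(cx)'. Then x* ·_c x ·_c x* = x* for all x ∈ S. -/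
/-- In the unary variant `(S, ·_c, *)` of an epigroup, `x* ·_c x ·_c x* = x*`,
where `x ·_c y = xcy` and `x* = (xc)' x (cx)'`. -/
theorem stmt_4 {S : Type*} [Semigroup S] (i : S → S) (c : S)
    (h1 : ∀ x : S, i x * x * i x = i x)
    (h2 : ∀ x : S, x * i x = i x * x)
    (h5 : ∀ x y : S, i (x * y) * x = x * i (y * x))
    (star : S → S) (hstar : ∀ x : S, star x = i (x * c) * x * i (c * x)) :
    ∀ x : S, star x * c * x * c * star x = star x := by
  intro x
  have hc : i (c * x) * c = c * i (x * c) := h5 c x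
  have key : star x * c * x = i (x * c) * x := by
    rw [hstar]
    calc i (x * c) * x * i (c * x) * c * x
        = i (x * c) * x * (i (c * x) * c) * x := by
          rw [mul_assoc (i (x * c) * x)]
      _ = i (x * c) * (x * c) * i (x * c) * x := by
          rw [hc]; simp only [mul_assoc]
      _ = i (x * c) * x := by rw [h1]
  rw [key, hstar]
  calc i (x * c) * x * c * (i (x * c) * x * i (c * x))
      = i (x * c) * (x * c) * i (x * c) * (x * i (c * x)) := by
        simp only [mul_assoc]
    _ = i (x * c) * x * i (c * x) := by rw [h1, mul_assoc]
end

section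
/- Let S be an epigroup (a unary semigroup satisfying x'xx' = x', xx' = x'x, and (xy)'x = x(yx)') and fix c ∈ S. With x ·_c y = xcy and x* = (xc)'x(cx)', we have x ·_c x* = x* ·_c x for all x ∈ S. -/
/-- In the unary variant `(S, ·_c, *)` of an epigroup, `x ·_c x* = x* ·_c x`,
where `x ·_c y = xcy` and `x* = (xc)' x (cx)'`. -/
theorem stmt_5 {S : Type*} [Semigroup S] (i : S → S) (c : S)
    (h1 : ∀ x : S, i x * x * i x = i x)
    (h2 : ∀ x : S, x * i x = i x * x)
    (h5 : ∀ x y : S, i (x * y) * x = x * i (y * x))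
    (star : S → S) (hstar : ∀ x : S, star x = i (x * c) * x * i (c * x)) :
    ∀ x : S, x * c * star x = star x * c * x := by
  intro x
  calc x * c * star x = (x * c * i (x * c)) * (x * i (c * x)) := by
        rw [hstar]; simp [mul_assoc]
    _ = (i (x * c) * (x * c)) * (x * i (c * x)) := by rw [h2]
    _ = i (x * c) * x * ((c * x) * i (c * x)) := by simp [mul_assoc]
    _ = i (x * c) * x * (i (c * x) * (c * x)) := by rw [h2]
    _ = star x * c * x := by rw [hstar]; simp [mul_assoc]
end

section
/- Let S be an epigroup (satisfying x'xx' = x', xx' = x'x, (xy)'x = x(yx)') and fix c ∈ S. Define x* = (xc)'x(cx)' and x** = (x*)*. Then c·x** = (cx)'' for all x ∈ S. -/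
/-- In an epigroup with fixed `c` and `x* = (xc)' x (cx)'`, we have `c x** = (cx)''`. -/
theorem stmt_6 {S : Type*} [Semigroup S] (i : S → S) (c : S)
    (h1 : ∀ x : S, i x * x * i x = i x)
    (h2 : ∀ x : S, x * i x = i x * x)
    (h5 : ∀ x y : S, i (x * y) * x = x * i (y * x))
    (star : S → S) (hstar : ∀ x : S, star x = i (x * c) * x * i (c * x)) :
    ∀ x : S, c * star (star x) = i (i (c * x)) := by
  have key : ∀ y : S, c * star y = i (c * y) := by
    intro y
    rw [hstar]
    calc c * (i (y * c) * y * i (c * y))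
        = (c * i (y * c)) * y * i (c * y) := by simp [mul_assoc]
      _ = (i (c * y) * c) * y * i (c * y) := by rw [← h5]
      _ = i (c * y) * (c * y) * i (c * y) := by simp [mul_assoc]
      _ = i (c * y) := h1 _
  intro x
  rw [key, key]
end

section
/- Let S be an epigroup in the variety V_n, i.e., a unary semigroup satisfying x'xx' = x', xx' = x'x, (xy)'x = x(yx)', xy^{n-1}y'' = xy^n, and x''x^{n-1}y = x^n y. Fix c ∈ S and define x ·_c y = xcy and x* = (xc)'x(cx)'. Then the unary variant (S, ·_c, *) also satisfies x ·_c y^{(n-1)} ·_c y** = x ·_c y^{(n)}, where y^{(k)} denotes the k-th power of y under ·_c. -/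
/-- If `S` lies in the variety `V_n` (identities `x'xx' = x'`, `xx' = x'x`, `(xy)'x = x(yx)'`,
`x y^(n-1) y'' = x y^n`, `x'' x^(n-1) y = x^n y`), then the unary variant at `c` satisfies
`x ·_c y^((n-1)) ·_c y** = x ·_c y^((n))`.  Using `y^((k)) = y (cy)^(k-1)`, this is
`x (cy)^(n-1) c y** = x (cy)^n`, with powers taken in `WithOne S`. -/
theorem stmt_7 {S : Type*} [Semigroup S] (i : S → S) (n : ℕ) (hn : 0 < n) (c : S)
    (h1 : ∀ x : S, i x * x * i x = i x)
    (h2 : ∀ x : S, x * i x = i x * x)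
    (h5 : ∀ x y : S, i (x * y) * x = x * i (y * x))
    (hV1 : ∀ x y : S, (x : WithOne S) * (y : WithOne S) ^ (n - 1) * (i (i y) : WithOne S)
        = (x : WithOne S) * (y : WithOne S) ^ n)
    (hV2 : ∀ x y : S, (i (i x) : WithOne S) * (x : WithOne S) ^ (n - 1) * (y : WithOne S)
        = (x : WithOne S) ^ n * (y : WithOne S))
    (star : S → S) (hstar : ∀ x : S, star x = i (x * c) * x * i (c * x)) :
    ∀ x y : S, (x : WithOne S) * ((c * y : S) : WithOne S) ^ (n - 1) * (c : WithOne S)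
        * (star (star y) : WithOne S)
      = (x : WithOne S) * ((c * y : S) : WithOne S) ^ n := by
  have key : ∀ y : S, c * star y = i (c * y) := by
    intro y
    rw [hstar]
    calc c * (i (y * c) * y * i (c * y))
        = (c * i (y * c)) * y * i (c * y) := by simp [mul_assoc]
      _ = (i (c * y) * c) * y * i (c * y) := by rw [← h5]
      _ = i (c * y) * (c * y) * i (c * y) := by simp [mul_assoc]
      _ = i (c * y) := h1 _
  intro x y
  have key2 : c * star (star y) = i (i (c * y)) := by
    rw [key (star y), key y]
  calc (x : WithOne S) * ((c * y : S) : WithOne S) ^ (n - 1) * (c : WithOne S)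
        * (star (star y) : WithOne S)
      = (x : WithOne S) * ((c * y : S) : WithOne S) ^ (n - 1)
        * ((c * star (star y) : S) : WithOne S) := by
        push_cast [mul_assoc]; ring_nf
    _ = (x : WithOne S) * ((c * y : S) : WithOne S) ^ (n - 1)
        * ((i (i (c * y)) : S) : WithOne S) := by rw [key2]
    _ = (x : WithOne S) * ((c * y : S) : WithOne S) ^ n := hV1 x (c * y)
end

section
/- Every unary semigroup in V_1 satisfies (xy)'' = xy. That is, if a semigroup S with unary operation ' satisfies x'xx' = x', xx' = x'x, x''' = x', xy'' = xy, and x''y = xy for all x,y, then (xy)'' = xy for all x,y ∈ S. -/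
/-- Every unary semigroup in `V_1` (identities `x'xx' = x'`, `xx' = x'x`, `x''' = x'`,
`x y'' = x y`, `x'' y = x y`) satisfies `(xy)'' = xy`. -/
theorem stmt_8 {S : Type*} [Semigroup S] (i : S → S)
    (h1 : ∀ x : S, i x * x * i x = i x)
    (h2 : ∀ x : S, x * i x = i x * x)
    (h3 : ∀ x : S, i (i (i x)) = i x)
    (hV1 : ∀ x y : S, x * i (i y) = x * y)
    (hV2 : ∀ x y : S, i (i x) * y = x * y) :
    ∀ x y : S, i (i (x * y)) = x * y := by
  -- Fact F : a'' = a * a' * a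
  have F : ∀ a : S, i (i a) = a * i a * a := by
    intro a
    calc i (i a) = i (i a) * i a * i (i a) := (h1 (i a)).symm
      _ = i (i a) * i a * a := by
            rw [mul_assoc, hV1, ← mul_assoc]
      _ = a * i a * a := by rw [hV2]
  intro x y
  set z := x * y with hz
  have hf : z * (i y * y) = z := by
    calc z * (i y * y) = x * (y * i y * y) := by
          simp only [hz, mul_assoc]
      _ = x * i (i y) := by rw [← F]
      _ = z := hV1 x y
  have h5 : i (i z) * (i y * y) = z := by
    rw [hV2]; exact hf
  calc i (i z) = z * i z * z := F z
    _ = z * i z * (i (i z) * (i y * y)) := by rw [h5]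
    _ = z * i z * i (i z) * (i y * y) :=
          (mul_assoc (z * i z) (i (i z)) (i y * y)).symm
    _ = z * i z * z * (i y * y) := by rw [hV1]
    _ = i (i z) * (i y * y) := by rw [← F]
    _ = z := h5
end

section
/- Let S be an epigroup (unary semigroup satisfying x'xx' = x', xx' = x'x, (xy)'x = x(yx)') in the variety W, i.e., additionally satisfying (xy)'' = xy for all x, y ∈ S. Fix c ∈ S and define x ·_c y = xcy, x* = (xc)'x(cx)'. Then the unary variant satisfies x ·_c y** = x ·_c y for all x, y ∈ S. -/
/-- Let `S` be an epigroup (`x'xx' = x'`, `xx' = x'x`, `(xy)'x = x(yx)'`) in the variety `W`,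
so in particular `(xy)'' = xy` holds.  Fix `c` and define `x ·_c y = xcy`,
`x* = (xc)' x (cx)'`.  Then the unary variant satisfies `x ·_c y** = x ·_c y`. -/
theorem stmt_10 {S : Type*} [Semigroup S] (i : S → S) (c : S)
    (h1 : ∀ x : S, i x * x * i x = i x)
    (h2 : ∀ x : S, x * i x = i x * x)
    (h5 : ∀ x y : S, i (x * y) * x = x * i (y * x))
    (hW : ∀ x y : S, i (i (x * y)) = x * y)
    (star : S → S) (hstar : ∀ x : S, star x = i (x * c) * x * i (c * x)) :
    ∀ x y : S, x * c * star (star y) = x * c * y := by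
  have key : ∀ z : S, c * star z = i (c * z) := by
    intro z
    rw [hstar]
    calc c * (i (z * c) * z * i (c * z))
        = (c * i (z * c)) * z * i (c * z) := by simp [mul_assoc]
      _ = (i (c * z) * c) * z * i (c * z) := by rw [← h5]
      _ = i (c * z) * (c * z) * i (c * z) := by simp [mul_assoc]
      _ = i (c * z) := h1 _
  intro x y
  calc x * c * star (star y) = x * (c * star (star y)) := by rw [mul_assoc]
    _ = x * i (c * star y) := by rw [key]
    _ = x * i (i (c * y)) := by rw [key]
    _ = x * (c * y) := by rw [hW]
    _ = x * c * y := by rw [← mul_assoc]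
end

section
/- Let S be an epigroup (unary semigroup satisfying x'xx' = x', xx' = x'x, (xy)'x = x(yx)') and c ∈ S. Define x ·_c y = xcy, x* = (xc)'x(cx)', and variant powers a^{(1)} = a, a^{(k+1)} = a ·_c a^{(k)}. If (ca)^{n+1}(ca)' = (ca)^n in S (i.e., ca has index at most n), then a^{(n+2)} ·_c a* = a^{(n+1)}; in particular a is an epigroup element of the variant of index at most n+1. -/
/-- In an epigroup with variant at `c`, if `ca` has index at most `n`
(i.e. `(ca)^(n+1) (ca)' = (ca)^n`), then `a^((n+2)) ·_c a* = a^((n+1))` in the variant;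
using `a^((k)) = a (ca)^(k-1)` this reads `a (ca)^(n+1) c a* = a (ca)^n`,
powers taken in `WithOne S`. -/
theorem stmt_13 {S : Type*} [Semigroup S] (i : S → S) (c a : S) (n : ℕ)
    (h1 : ∀ x : S, i x * x * i x = i x)
    (h2 : ∀ x : S, x * i x = i x * x)
    (h5 : ∀ x y : S, i (x * y) * x = x * i (y * x))
    (star : S → S) (hstar : ∀ x : S, star x = i (x * c) * x * i (c * x))
    (hidx : ((c * a : S) : WithOne S) ^ (n + 1) * (i (c * a) : WithOne S)
        = ((c * a : S) : WithOne S) ^ n) :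
    (a : WithOne S) * ((c * a : S) : WithOne S) ^ (n + 1) * (c : WithOne S)
        * (star a : WithOne S)
      = (a : WithOne S) * ((c * a : S) : WithOne S) ^ n := by
  set b : WithOne S := ((c * a : S) : WithOne S) with hb
  set j : WithOne S := (i (c * a) : WithOne S) with hj
  have key : c * (i (a * c) * a) = (c * a) * i (c * a) := by
    rw [h5 a c, ← mul_assoc]
  have e2 : (c : WithOne S) * ((i (a * c) : S) : WithOne S) * (a : WithOne S) = b * j := by
    rw [mul_assoc, ← WithOne.coe_mul, ← WithOne.coe_mul, key, WithOne.coe_mul]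
  have e1 : ((star a : S) : WithOne S)
      = ((i (a * c) : S) : WithOne S) * (a : WithOne S) * j := by
    rw [hstar]; simp [WithOne.coe_mul, hj]
  rw [e1]
  calc (a : WithOne S) * b ^ (n + 1) * (c : WithOne S)
        * (((i (a * c) : S) : WithOne S) * (a : WithOne S) * j)
      = (a : WithOne S) * b ^ (n + 1)
        * ((c : WithOne S) * ((i (a * c) : S) : WithOne S) * (a : WithOne S)) * j := by
        simp only [mul_assoc]
    _ = (a : WithOne S) * b ^ (n + 1) * (b * j) * j := by rw [e2]
    _ = (a : WithOne S) * (b * (b ^ (n + 1) * j)) * j := by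
        simp only [mul_assoc]
        rw [← mul_assoc (b ^ (n+1)) b, ← pow_succ, pow_succ', mul_assoc]
    _ = (a : WithOne S) * (b * b ^ n) * j := by rw [hidx]
    _ = (a : WithOne S) * (b ^ (n + 1) * j) := by rw [← pow_succ']; simp only [mul_assoc]
    _ = (a : WithOne S) * b ^ n := by rw [hidx]
end

section
/- Let S be an epigroup (unary semigroup satisfying x'xx' = x', xx' = x'x, (xy)'x = x(yx)') and c ∈ S, with x ·_c y = xcy, x* = (xc)'x(cx)', and variant powers a^{(k)}. If a^{(k+1)} ·_c a* = a^{(k)} for some k ≥ 1, then (ca)^{k+1}(ca)' = (ca)^k in S. -/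
/-- Converse bound on indices: in an epigroup with variant at `c`, if
`a^((k+1)) ·_c a* = a^((k))` for some `k ≥ 1` (i.e. `a (ca)^k c a* = a (ca)^(k-1)`),
then `(ca)^(k+1) (ca)' = (ca)^k` in `S`.  Powers are taken in `WithOne S`. -/
theorem stmt_14 {S : Type*} [Semigroup S] (i : S → S) (c a : S) (k : ℕ) (hk : 1 ≤ k)
    (h1 : ∀ x : S, i x * x * i x = i x)
    (h2 : ∀ x : S, x * i x = i x * x)
    (h5 : ∀ x y : S, i (x * y) * x = x * i (y * x))
    (star : S → S) (hstar : ∀ x : S, star x = i (x * c) * x * i (c * x))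
    (hvar : (a : WithOne S) * ((c * a : S) : WithOne S) ^ k * (c : WithOne S)
        * (star a : WithOne S)
      = (a : WithOne S) * ((c * a : S) : WithOne S) ^ (k - 1)) :
    ((c * a : S) : WithOne S) ^ (k + 1) * (i (c * a) : WithOne S)
      = ((c * a : S) : WithOne S) ^ k := by
  -- key identity in S: c * star a = i (c * a)
  have key : c * star a = i (c * a) := by
    rw [hstar]
    calc c * (i (a * c) * a * i (c * a))
        = (c * i (a * c)) * a * i (c * a) := by simp [mul_assoc]
      _ = (i (c * a) * c) * a * i (c * a) := by rw [← h5 c a]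
      _ = i (c * a) * (c * a) * i (c * a) := by rw [mul_assoc (i (c * a)) c a]
      _ = i (c * a) := h1 (c * a)
  have h := congrArg (fun x => ((c : S) : WithOne S) * x) hvar
  have e1 : ((c : S) : WithOne S) * ((a : WithOne S) * ((c * a : S) : WithOne S) ^ k
      * (c : WithOne S) * (star a : WithOne S))
      = ((c * a : S) : WithOne S) ^ (k + 1) * (i (c * a) : WithOne S) := by
    rw [pow_succ']
    calc ((c : S) : WithOne S) * ((a : WithOne S) * ((c * a : S) : WithOne S) ^ k
        * (c : WithOne S) * (star a : WithOne S))
        = (((c : S) : WithOne S) * (a : WithOne S)) * ((c * a : S) : WithOne S) ^ k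
          * (((c : S) : WithOne S) * (star a : WithOne S)) := by simp [mul_assoc]
      _ = ((c * a : S) : WithOne S) * ((c * a : S) : WithOne S) ^ k
          * ((c * star a : S) : WithOne S) := by rw [← WithOne.coe_mul, ← WithOne.coe_mul]
      _ = ((c * a : S) : WithOne S) * ((c * a : S) : WithOne S) ^ k
          * (i (c * a) : WithOne S) := by rw [key]
  have e2 : ((c : S) : WithOne S) * ((a : WithOne S) * ((c * a : S) : WithOne S) ^ (k - 1))
      = ((c * a : S) : WithOne S) ^ k := by
    conv_rhs => rw [← Nat.succ_pred_eq_of_pos hk, pow_succ']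
    rw [← mul_assoc, ← WithOne.coe_mul]; rfl
  rw [e1, e2] at h
  exact h
end

section
/- Setting y = x in the identity xy^{n-1}y'' = xy^n of the variety V_n yields x^n x'' = x^{n+1}, and hence (using x'xx' = x', xx' = x'x, and Lemma E_n-alternative with index n+1) every member of V_n satisfies x^{n+2}x' = x^{n+1}; thus V_n ⊆ E_{n+1}. -/
/-- Every member of `V_n` satisfies `x^n x'' = x^(n+1)` (set `y = x` in `x y^(n-1) y'' = x y^n`)
and hence `x^(n+2) x' = x^(n+1)`; thus `V_n ⊆ E_(n+1)`.  Powers in `WithOne S`. -/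
theorem stmt_16 {S : Type*} [Semigroup S] (i : S → S) (n : ℕ) (hn : 0 < n)
    (h1 : ∀ x : S, i x * x * i x = i x)
    (h2 : ∀ x : S, x * i x = i x * x)
    (hV1 : ∀ x y : S, (x : WithOne S) * (y : WithOne S) ^ (n - 1) * (i (i y) : WithOne S)
        = (x : WithOne S) * (y : WithOne S) ^ n)
    (hV2 : ∀ x y : S, (i (i x) : WithOne S) * (x : WithOne S) ^ (n - 1) * (y : WithOne S)
        = (x : WithOne S) ^ n * (y : WithOne S)) :
    ∀ x : S, (x : WithOne S) ^ n * (i (i x) : WithOne S) = (x : WithOne S) ^ (n + 1) ∧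
      (x : WithOne S) ^ (n + 2) * (i x : WithOne S) = (x : WithOne S) ^ (n + 1) := by
  intro x
  set a : WithOne S := (x : WithOne S) with ha
  set b : WithOne S := (i x : WithOne S) with hb
  set c : WithOne S := (i (i x) : WithOne S) with hc
  -- basic power fact
  have hpow : a ^ (n - 1) * a = a ^ n := by
    rw [← pow_succ, Nat.sub_add_cancel hn]
  have hpow' : a * a ^ (n - 1) = a ^ n := by
    rw [← pow_succ', Nat.sub_add_cancel hn]
  -- x^n x'' = x^(n+1)
  have hf : a ^ n * c = a ^ (n + 1) := by
    have := hV1 x x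
    rw [← ha, ← hc, hpow'] at this
    rw [this, ← pow_succ']
  -- x'' x^n = x^(n+1)
  have hg : c * a ^ n = a ^ (n + 1) := by
    have := hV2 x x
    rw [← ha, ← hc, mul_assoc, hpow, ← pow_succ] at this
    exact this
  -- b commutes with a
  have hba : b * a = a * b := by
    have := congrArg (fun s : S => (s : WithOne S)) (h2 x)
    simp only [WithOne.coe_mul] at this
    exact this.symm
  have hbapow : b * a ^ (n + 1) = a ^ (n + 1) * b :=
    Commute.pow_right hba (n + 1)
  -- x'' x' x'' = x''
  have hcbc : c * b * c = c := by
    have := congrArg (fun s : S => (s : WithOne S)) (h1 (i x))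
    simp only [WithOne.coe_mul] at this
    exact this
  -- x'' x^(n+1) = x^(n+2)
  have hcn2 : c * a ^ (n + 1) = a ^ (n + 2) := by
    calc c * a ^ (n + 1) = c * (a ^ n * a) := by rw [pow_succ]
    _ = c * a ^ n * a := by rw [mul_assoc]
    _ = a ^ (n + 1) * a := by rw [hg]
    _ = a ^ (n + 2) := by rw [← pow_succ]
  refine ⟨hf, ?_⟩
  calc a ^ (n + 2) * b = c * a ^ (n + 1) * b := by rw [hcn2]
    _ = c * (a ^ (n + 1) * b) := by rw [mul_assoc]
    _ = c * (b * a ^ (n + 1)) := by rw [hbapow]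
    _ = c * (b * (c * a ^ n)) := by rw [hg]
    _ = c * b * c * a ^ n := by rw [mul_assoc, mul_assoc]
    _ = c * a ^ n := by rw [hcbc]
    _ = a ^ (n + 1) := hg
end

section
/- Every unary semigroup in E_n lies in V_n: if S satisfies x'xx' = x', xx' = x'x, and x^{n+1}x' = x^n, then S satisfies xy^{n-1}y'' = xy^n and x''x^{n-1}y = x^n y for all x, y. -/
section Aux

variable {M : Type*} [Monoid M] {a b c : M}

/-- From `b*a*b = b` and `a*b = b*a`: `b^(k+1) * a^k = b`. -/
private lemma pinv_pow (hba : b * a * b = b) (hab : a * b = b * a) :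
    ∀ k : ℕ, b ^ (k + 1) * a ^ k = b := by
  have h2 : b * (b * a) = b := by rw [← hab, ← mul_assoc, hba]
  intro k
  induction k with
  | zero => simp
  | succ k ih =>
    have e1 : b ^ (k + 2) * a ^ (k + 1) = b ^ k * (b * (b * a)) * a ^ k := by
      rw [pow_succ b (k + 1), pow_succ b k, pow_succ' a k]
      simp only [mul_assoc]
    rw [e1, h2, ← pow_succ, ih]

private lemma pinv_pow_red (hba : b * a * b = b) (hab : a * b = b * a) :
    ∀ i j : ℕ, b ^ (i + j + 1) * a ^ i = b ^ (j + 1) := by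
  intro i j
  have h := pinv_pow hba hab i
  have e1 : b ^ (i + j + 1) = b ^ j * b ^ (i + 1) := by
    rw [← pow_add]; congr 1; omega
  rw [e1, mul_assoc, h, ← pow_succ]

private lemma powAbsorb (hab : a * b = b * a) (n : ℕ) (hA : a ^ (n + 1) * b = a ^ n) :
    ∀ k : ℕ, a ^ (n + k) * b ^ k = a ^ n := by
  intro k
  induction k with
  | zero => simp
  | succ k ih =>
    have h1 : a ^ (n + k + 1) * b = a ^ (n + k) := by
      have e : a ^ (n + k + 1) = a ^ k * a ^ (n + 1) := by rw [← pow_add]; congr 1; omega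
      rw [e, mul_assoc, hA, ← pow_add]; congr 1; omega
    have e1 : a ^ (n + (k + 1)) * b ^ (k + 1) = (a ^ (n + k + 1) * b) * b ^ k := by
      rw [show n + (k + 1) = n + k + 1 from rfl, pow_succ' b k]
      simp only [mul_assoc]
    rw [e1, h1, ih]

lemma key (a b c : M) (n : ℕ) (hn : 0 < n)
    (hba : b * a * b = b) (hab : a * b = b * a)
    (hcb : c * b * c = c) (hbc : b * c = c * b)
    (hA : a ^ (n + 1) * b = a ^ n) (hB : b ^ (n + 1) * c = b ^ n) :
    a ^ (n - 1) * c = a ^ n ∧ c * a ^ (n - 1) = a ^ n := by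
  obtain ⟨p, rfl⟩ : ∃ p, n = p + 1 := ⟨n - 1, by omega⟩
  simp only [Nat.add_sub_cancel]
  have cab : Commute a b := hab
  have cbc : Commute b c := hbc
  have L2 := pinv_pow hba hab
  have L3 := pinv_pow hcb hbc
  have L4 := pinv_pow_red hba hab
  have L5 := pinv_pow_red hcb hbc
  have L7 := powAbsorb hab (p + 1) hA
  have L8 := powAbsorb hbc (p + 1) hB
  -- c^(m+1) = c^(m+p+2) * b^(p+1)
  have L6 : ∀ m : ℕ, c ^ (m + 1) = c ^ (m + p + 2) * b ^ (p + 1) := by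
    intro m
    have h := L3 (p + 1)  -- c^(p+2) * b^(p+1) = c
    calc c ^ (m + 1) = c ^ m * c := pow_succ c m
      _ = c ^ m * (c ^ (p + 2) * b ^ (p + 1)) := by rw [h]
      _ = c ^ (m + p + 2) * b ^ (p + 1) := by
          rw [← mul_assoc, ← pow_add, show m + (p + 2) = m + p + 2 from rfl]
  -- b^(p+1) * a^k = b^(p+1-k) for k ≤ p
  have Lba : ∀ k : ℕ, k ≤ p → b ^ (p + 1) * a ^ k = b ^ (p - k + 1) := by
    intro k hk
    have := L4 k (p - k)
    rw [show k + (p - k) + 1 = p + 1 from by omega] at this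
    exact this
  -- c^j * b^(p-k+1) reduction
  have main1 : ∀ k m : ℕ, k ≤ p → a ^ k * c ^ (m + 1) = c ^ (k + m + 1) := by
    intro k m hk
    have h5 := L5 (p - k + 1) (m + k)
    rw [show p - k + 1 + (m + k) + 1 = m + p + 2 from by omega] at h5
    calc a ^ k * c ^ (m + 1) = a ^ k * (c ^ (m + p + 2) * b ^ (p + 1)) := by rw [← L6]
      _ = a ^ k * (b ^ (p + 1) * c ^ (m + p + 2)) := by
          rw [(cbc.symm.pow_pow (m + p + 2) (p + 1)).eq]
      _ = (a ^ k * b ^ (p + 1)) * c ^ (m + p + 2) := by rw [mul_assoc]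
      _ = (b ^ (p + 1) * a ^ k) * c ^ (m + p + 2) := by rw [(cab.pow_pow k (p + 1)).eq]
      _ = b ^ (p - k + 1) * c ^ (m + p + 2) := by rw [Lba k hk]
      _ = c ^ (m + p + 2) * b ^ (p - k + 1) := (cbc.pow_pow (p - k + 1) (m + p + 2)).eq
      _ = c ^ (m + k + 1) := h5
      _ = c ^ (k + m + 1) := by rw [show m + k + 1 = k + m + 1 from by omega]
  have main2 : ∀ k m : ℕ, k ≤ p → c ^ (m + 1) * a ^ k = c ^ (k + m + 1) := by
    intro k m hk
    have h5 := L5 (p - k + 1) (m + k)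
    rw [show p - k + 1 + (m + k) + 1 = m + p + 2 from by omega] at h5
    calc c ^ (m + 1) * a ^ k = (c ^ (m + p + 2) * b ^ (p + 1)) * a ^ k := by rw [← L6]
      _ = c ^ (m + p + 2) * (b ^ (p + 1) * a ^ k) := by rw [mul_assoc]
      _ = c ^ (m + p + 2) * b ^ (p - k + 1) := by rw [Lba k hk]
      _ = c ^ (m + k + 1) := h5
      _ = c ^ (k + m + 1) := by rw [show m + k + 1 = k + m + 1 from by omega]
  -- a^(p+1) * b^(p+1) = a * b
  have step_i : a ^ (p + 1) * b ^ (p + 1) = a * b := by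
    calc a ^ (p + 1) * b ^ (p + 1) = a * (a ^ p * b ^ (p + 1)) := by
          rw [pow_succ' a p, mul_assoc]
      _ = a * (b ^ (p + 1) * a ^ p) := by rw [(cab.pow_pow p (p + 1)).eq]
      _ = a * b := by rw [L2 p]
  -- a^(p+1) = a * (b * c^(p+1))
  have step_ii : a ^ (p + 1) = a * (b * c ^ (p + 1)) := by
    have e7 := L7 (p + 1)  -- a^(p+1+(p+1)) * b^(p+1) = a^(p+1)
    have e8 := L8 (p + 1)  -- b^(p+1+(p+1)) * c^(p+1) = b^(p+1)
    have e2 : a ^ (p + 1 + (p + 1)) * b ^ (p + 1 + (p + 1)) = a * b := by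
      have : a ^ (p + 1 + (p + 1)) * b ^ (p + 1 + (p + 1))
          = a ^ (p + 1) * (a ^ (p + 1) * b ^ (p + 1)) * b ^ (p + 1) := by
        rw [pow_add a, pow_add b]; simp only [mul_assoc]
      rw [this, step_i]
      calc a ^ (p + 1) * (a * b) * b ^ (p + 1)
          = (a ^ (p + 1 + 1) * b) * b ^ (p + 1) := by
            simp only [pow_succ, mul_assoc]
        _ = a ^ (p + 1) * b ^ (p + 1) := by rw [hA]
        _ = a * b := step_i
    calc a ^ (p + 1) = a ^ (p + 1 + (p + 1)) * b ^ (p + 1) := e7.symm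
      _ = a ^ (p + 1 + (p + 1)) * (b ^ (p + 1 + (p + 1)) * c ^ (p + 1)) := by rw [e8]
      _ = (a ^ (p + 1 + (p + 1)) * b ^ (p + 1 + (p + 1))) * c ^ (p + 1) := by
          rw [mul_assoc]
      _ = (a * b) * c ^ (p + 1) := by rw [e2]
      _ = a * (b * c ^ (p + 1)) := by rw [mul_assoc]
  rcases Nat.eq_zero_or_pos p with hp | hp
  · -- n = 1 case: show c = a
    subst hp
    have hc2b : c * c * b = c := by
      calc c * c * b = c * (c * b) := by rw [mul_assoc]
        _ = c * (b * c) := by rw [hbc]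
        _ = c := by rw [← mul_assoc, hcb]
    have hb2c' : b * b * c = b := by simpa [pow_succ, mul_assoc] using hB
    -- (b*c)*(a*b) two ways
    have t1 : c * b = b * a := by
      have w1 : b * c * (a * b) = c * b := by
        rw [hbc]
        calc c * b * (a * b) = c * (b * a * b) := by simp only [mul_assoc]
          _ = c * b := by rw [hba]
      have w2 : b * c * (a * b) = b * a := by
        calc b * c * (a * b) = b * c * (b * a) := by rw [hab]
          _ = b * (c * b) * a := by simp only [mul_assoc]
          _ = b * (b * c) * a := by rw [hbc]
          _ = b * b * c * a := by simp only [mul_assoc]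
          _ = b * a := by rw [hb2c']
      rw [← w1, w2]
    have ha2b : a * a * b = a := by simpa [pow_succ, mul_assoc] using hA
    have hac : a = c := by
      calc a = a * a * b := ha2b.symm
        _ = a * (a * b) := by rw [mul_assoc]
        _ = a * (b * c) := by rw [hab, ← t1, hbc]
        _ = a * b * c := by rw [mul_assoc]
        _ = b * c * c := by rw [hab, ← t1, hbc]
        _ = c * c * b := by
            rw [hbc, mul_assoc, hbc, ← mul_assoc]
        _ = c := hc2b
    simp [hac]
  · -- p ≥ 1, i.e. n ≥ 2
    have step_iv : b * c ^ (p + 1) = c ^ p := by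
      have h5 := L5 1 (p - 1)
      rw [show 1 + (p - 1) + 1 = p + 1 from by omega, pow_one,
        show p - 1 + 1 = p from by omega] at h5
      rw [(cbc.pow_right (p + 1)).eq, h5]
    have hacn : a ^ (p + 1) = c ^ (p + 1) := by
      have m1 := main1 1 (p - 1) (by omega)
      rw [pow_one, show p - 1 + 1 = p from by omega,
        show 1 + (p - 1) + 1 = p + 1 from by omega] at m1
      rw [step_ii, step_iv, m1]
    constructor
    · have := main1 p 0 le_rfl
      rw [pow_one] at this
      rw [this, show p + 0 + 1 = p + 1 from rfl, hacn]
    · have := main2 p 0 le_rfl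
      rw [pow_one] at this
      rw [this, show p + 0 + 1 = p + 1 from rfl, hacn]

end Aux

/-- Every unary semigroup in `E_n` lies in `V_n`: if `S` satisfies `x'xx' = x'`, `xx' = x'x`,
and `x^(n+1) x' = x^n`, then it satisfies `x y^(n-1) y'' = x y^n` and
`x'' x^(n-1) y = x^n y`.  Powers in `WithOne S`. -/
theorem stmt_17 {S : Type*} [Semigroup S] (i : S → S) (n : ℕ) (hn : 0 < n)
    (h1 : ∀ x : S, i x * x * i x = i x)
    (h2 : ∀ x : S, x * i x = i x * x)
    (h3 : ∀ x : S, (x : WithOne S) ^ (n + 1) * (i x : WithOne S) = (x : WithOne S) ^ n) :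
    ∀ x y : S,
      (x : WithOne S) * (y : WithOne S) ^ (n - 1) * (i (i y) : WithOne S)
        = (x : WithOne S) * (y : WithOne S) ^ n ∧
      (i (i x) : WithOne S) * (x : WithOne S) ^ (n - 1) * (y : WithOne S)
        = (x : WithOne S) ^ n * (y : WithOne S) := by
  have lift1 : ∀ z : S, (i z : WithOne S) * z * i z = i z := by
    intro z
    rw [← WithOne.coe_mul, ← WithOne.coe_mul, h1]
  have lift2 : ∀ z : S, (z : WithOne S) * i z = (i z : WithOne S) * z := by
    intro z
    rw [← WithOne.coe_mul, ← WithOne.coe_mul, h2]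
  have K : ∀ z : S, (z : WithOne S) ^ (n - 1) * (i (i z) : WithOne S) = (z : WithOne S) ^ n ∧
      (i (i z) : WithOne S) * (z : WithOne S) ^ (n - 1) = (z : WithOne S) ^ n := by
    intro z
    exact key (z : WithOne S) (i z) (i (i z)) n hn (lift1 z) (lift2 z)
      (lift1 (i z)) (lift2 (i z)) (h3 z) (h3 (i z))
  intro x y
  constructor
  · rw [mul_assoc, (K y).1]
  · rw [(K x).2]
end
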